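/- For all extended-real failure times A, B, C: A ◁ (B Δ C) = A·(B ◁ C) + A·(C ◁ B) + (A ◁ B) + (A ◁ C). -/

import Mathlib

noncomputable def dAND (A B : EReal) : EReal := max A B
noncomputable def dOR (A B : EReal) : EReal := min A B
noncomputable def dBEFORE (A B : EReal) : EReal := if A < B then A else ⊤
noncomputable def dIBEFORE (A B : EReal) : EReal := if A ≤ B then A else ⊤
noncomputable def dSIMULT (A B : EReal) : EReal := if A = B then A else ⊤
noncomputable def NEVER : EReal := ⊤

/-! If `B ≠ C` the left side is `A ◁ ∞ = A`, and on the right `A·(B ◁ C) + (A ◁ B) = A` for `B < C`,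
while every other summand is at least `A`. If `B = C` both sides reduce to `A ◁ B`. -/

section FailureTimes

variable {A B C : EReal}

theorem dBEFORE_of_lt (h : A < B) : dBEFORE A B = A := if_pos h

theorem dBEFORE_of_le (h : B ≤ A) : dBEFORE A B = ⊤ := if_neg h.not_gt

theorem dBEFORE_top (A : EReal) : dBEFORE A ⊤ = A := by
  rcases lt_or_eq_of_le (le_top : A ≤ ⊤) with h | rfl
  · exact dBEFORE_of_lt h
  · exact dBEFORE_of_le le_rfl

theorem le_dBEFORE (A B : EReal) : A ≤ dBEFORE A B := by
  unfold dBEFORE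
  split_ifs
  exacts [le_rfl, le_top]

theorem dOR_dAND_dBEFORE (A B : EReal) : dOR (dAND A B) (dBEFORE A B) = A := by
  unfold dOR dAND
  rcases lt_or_ge A B with h | h
  · rw [dBEFORE_of_lt h, max_eq_right h.le, min_eq_right h.le]
  · rw [dBEFORE_of_le h, max_eq_left h, min_top_right]

theorem dAND_top (A : EReal) : dAND A ⊤ = ⊤ := max_top_right A

theorem dOR_top (A : EReal) : dOR A ⊤ = A := min_top_right A

theorem dSIMULT_self (B : EReal) : dSIMULT B B = B := if_pos rfl

theorem dSIMULT_of_ne (h : B ≠ C) : dSIMULT B C = ⊤ := if_neg h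

theorem before_simult_rhs_of_lt (A : EReal) (h : B < C) :
    dOR (dOR (dOR (dAND A (dBEFORE B C)) (dAND A (dBEFORE C B))) (dBEFORE A B)) (dBEFORE A C) =
      A := by
  rw [dBEFORE_of_lt h, dBEFORE_of_le h.le, dAND_top, dOR_top, dOR_dAND_dBEFORE]
  exact min_eq_left (le_dBEFORE A C)

end FailureTimes

theorem before_simult (A B C : EReal) :
    dBEFORE A (dSIMULT B C) =
      dOR (dOR (dOR (dAND A (dBEFORE B C)) (dAND A (dBEFORE C B))) (dBEFORE A B)) (dBEFORE A C) := by
  rcases lt_trichotomy B C with h | rfl | h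
  · rw [dSIMULT_of_ne h.ne, dBEFORE_top, before_simult_rhs_of_lt A h]
  · rw [dSIMULT_self, dBEFORE_of_le le_rfl, dAND_top, dOR_top]
    unfold dOR
    rw [min_top_left, min_self]
  · rw [dSIMULT_of_ne h.ne', dBEFORE_top]
    conv_lhs => rw [← before_simult_rhs_of_lt A h]
    simp only [dOR]
    ac_rfl
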